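/- arXiv:2510.15366 — 3 statements merged into one kernel-verified Lean document; each statement's English description precedes it below -/
import Mathlib

section
/- Let G be an RKHS on Z satisfying: G is closed under pointwise multiplication with bounded multiplication map, and there is a bounded operator U : G → G with U φ(z) = E[φ(Z^{n+1})|Zⁿ = z] (the conditional mean embedding of a time-homogeneous Markov chain Z^{1:N}). Let T : G → G ⊗ G be the adjoint of the multiplication operator. Then TU φ(z) = E[φ(Z^{n+1}) ⊗ φ(Z^{n+1}) | Zⁿ = z] for all z ∈ Z. -/
open MeasureTheory RealInnerProductSpace

/-- If `G` is an RKHS closed under pointwise multiplication with adjoint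
multiplication operator `T` (so `Tφ(z) = φ(z) ⊗ φ(z)`), and `U` is the well-specified CME
operator of the Markov transition kernel `u` (so `Uφ(z) = E[φ(Z^{n+1})|Zⁿ = z]`), then
`TU φ(z) = E[φ(Z^{n+1}) ⊗ φ(Z^{n+1}) | Zⁿ = z]` for all `z`. -/
theorem stmt_4
    {𝒵 G GG : Type*} [MeasurableSpace 𝒵]
    [NormedAddCommGroup G] [InnerProductSpace ℝ G] [CompleteSpace G]
    [NormedAddCommGroup GG] [InnerProductSpace ℝ GG] [CompleteSpace GG]
    -- feature map of the RKHS `G` on `𝒵`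
    (φ : 𝒵 → G)
    -- Markov transition kernel `u(z, ·)` of the time-homogeneous chain
    (u : 𝒵 → Measure 𝒵) (hu : ∀ z, IsProbabilityMeasure (u z))
    -- all Bochner integrals exist
    (hint : ∀ z, Integrable φ (u z))
    -- `GG = G ⊗ G` via the continuous bilinear tensor map `tm`
    (tm : G →L[ℝ] G →L[ℝ] GG)
    (hint2 : ∀ z, Integrable (fun z' => tm (φ z') (φ z')) (u z))
    (htm_inner : ∀ a b a' b' : G, ⟪tm a b, tm a' b'⟫ = ⟪a, a'⟫ * ⟪b, b'⟫)
    -- adjoint of the multiplication operator, sending `φ(z)` to `φ(z) ⊗ φ(z)`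
    (T : G →L[ℝ] GG) (hT : ∀ z, T (φ z) = tm (φ z) (φ z))
    -- the well-specified CME operator of the transition kernel
    (U : G →L[ℝ] G) (hU : ∀ z, U (φ z) = ∫ z', φ z' ∂(u z)) :
    ∀ z, T (U (φ z)) = ∫ z', tm (φ z') (φ z') ∂(u z) := by
  intro z
  rw [hU, ← T.integral_comp_comm (hint z)]
  exact integral_congr_ae (Filter.Eventually.of_forall fun z' => hT z')
end

section
/- Let Z¹, Z², Z³ be a Markov chain on Z, G an RKHS on Z with feature map φ, and suppose a bounded CME operator U : G → G satisfies Uφ(z) = E[φ(Z^{n+1})|Zⁿ = z], admitting a finite-rank decomposition U = Σᵢ λᵢ hᵢ ⊗ gᵢ with hᵢ, gᵢ ∈ G. Suppose G is closed under pointwise multiplication with adjoint multiplication operator T. Then E[φ(Z¹) ⊗ φ(Z²) ⊗ φ(Z³)] = Σ_{i,j} b_i ⊗ λᵢ w_{i,j} ⊗ λⱼ hⱼ, where b_i = [T μ_{Z¹}] gᵢ and w_{i,j} = [T hᵢ] gⱼ, with μ_{Z¹} = E[φ(Z¹)] and elements of G ⊗ G identified with Hilbert–Schmidt operators on G. -/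
open MeasureTheory RealInnerProductSpace

/-- Tensor network decomposition of the hidden-chain mean embedding for a
Markov chain `Z¹, Z², Z³` with finite-rank CME operator `U = Σᵢ λᵢ hᵢ ⊗ gᵢ`:
`E[φ(Z¹) ⊗ φ(Z²) ⊗ φ(Z³)] = Σ_{i,j} b_i ⊗ λᵢ w_{i,j} ⊗ λⱼ hⱼ`, where
`b_i = [T μ_{Z¹}] gᵢ` and `w_{i,j} = [T hᵢ] gⱼ`. -/
theorem stmt_5
    {𝒵 G GG G3 : Type*} [MeasurableSpace 𝒵]
    [NormedAddCommGroup G] [InnerProductSpace ℝ G] [CompleteSpace G]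
    [NormedAddCommGroup GG] [InnerProductSpace ℝ GG] [CompleteSpace GG]
    [NormedAddCommGroup G3] [InnerProductSpace ℝ G3] [CompleteSpace G3]
    -- bounded measurable feature map of the RKHS `G` on `𝒵`
    (φ : 𝒵 → G) (hφmeas : StronglyMeasurable φ) (hφbdd : ∃ M, ∀ z, ‖φ z‖ ≤ M)
    -- the Markov chain: initial distribution `ν` of `Z¹` and transition kernel `u`
    (ν : Measure 𝒵) [IsProbabilityMeasure ν]
    (u : 𝒵 → Measure 𝒵) (hu : ∀ z, IsProbabilityMeasure (u z))
    (humeas : ∀ s : Set 𝒵, MeasurableSet s → Measurable (fun z => u z s))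
    -- `GG = G ⊗ G` and `G3 = G ⊗ G ⊗ G` via continuous (bi/tri)linear tensor maps
    (tm : G →L[ℝ] G →L[ℝ] GG)
    (tprod3 : G →L[ℝ] G →L[ℝ] G →L[ℝ] G3)
    -- adjoint multiplication operator: `Tφ(z) = φ(z) ⊗ φ(z)`
    (T : G →L[ℝ] GG) (hT : ∀ z, T (φ z) = tm (φ z) (φ z))
    -- identification of `G ⊗ G` with Hilbert–Schmidt operators on `G`: `(a ⊗ b)f = ⟪b, f⟫a`
    (app : GG →L[ℝ] G →L[ℝ] G)
    (happ : ∀ a b f : G, app (tm a b) f = ⟪b, f⟫ • a)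
    -- finite-rank decomposition `U = Σᵢ λᵢ hᵢ ⊗ gᵢ` of the CME operator
    {r : ℕ} (lam : Fin r → ℝ) (h g : Fin r → G)
    (U : G →L[ℝ] G)
    (hUcme : ∀ z, U (φ z) = ∫ z', φ z' ∂(u z))
    (hUdecomp : ∀ f : G, U f = ∑ i, lam i • ⟪g i, f⟫ • h i)
    -- mean embedding of `Z¹` and the tensor-network components
    (μ1 : G) (hμ1 : μ1 = ∫ z, φ z ∂ν)
    (b : Fin r → G) (hb : ∀ i, b i = app (T μ1) (g i))
    (w : Fin r → Fin r → G) (hw : ∀ i j, w i j = app (T (h i)) (g j)) :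
    (∫ z1, (∫ z2, (∫ z3, tprod3 (φ z1) (φ z2) (φ z3) ∂(u z2)) ∂(u z1)) ∂ν)
      = ∑ i, ∑ j, tprod3 (b i) (lam i • w i j) (lam j • h j) := by

  obtain ⟨M, hM⟩ := hφbdd
  have intφ : ∀ (m : Measure 𝒵) [IsFiniteMeasure m], Integrable φ m := by
    intro m _
    exact ⟨hφmeas.aestronglyMeasurable,
      MeasureTheory.HasFiniteIntegral.of_bounded (ae_of_all _ hM)⟩
  -- the continuous linear map for the outer (z1) integral
  set L3 : G →L[ℝ] G3 :=
    ∑ i, ∑ j, (lam i * lam j) •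
      ((((tprod3.flip (w i j)).flip (h j)).comp ((app.flip (g i)).comp T))) with hL3
  have hstep : ∀ z1,
      (∫ z2, (∫ z3, tprod3 (φ z1) (φ z2) (φ z3) ∂(u z2)) ∂(u z1)) = L3 (φ z1) := by
    intro z1
    haveI := hu z1
    -- collapse the innermost integral
    have h3 : ∀ z2, (∫ z3, tprod3 (φ z1) (φ z2) (φ z3) ∂(u z2))
        = tprod3 (φ z1) (φ z2) (U (φ z2)) := by
      intro z2
      haveI := hu z2
      rw [(tprod3 (φ z1) (φ z2)).integral_comp_comm (intφ (u z2)), ← hUcme]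
    simp only [h3]
    -- the CLM for the middle integral
    set L2 : G →L[ℝ] G3 :=
      ∑ j, lam j • (((tprod3 (φ z1)).flip (h j)).comp ((app.flip (g j)).comp T)) with hL2
    have h2 : ∀ z2, tprod3 (φ z1) (φ z2) (U (φ z2)) = L2 (φ z2) := by
      intro z2
      rw [hUdecomp]
      simp only [hL2, map_sum, _root_.map_smul, ContinuousLinearMap.sum_apply,
        ContinuousLinearMap.smul_apply, ContinuousLinearMap.coe_comp', Function.comp_apply,
        ContinuousLinearMap.flip_apply, hT, happ]
      refine Finset.sum_congr rfl fun j _ => ?_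
      rw [real_inner_comm]
    simp only [h2]
    rw [L2.integral_comp_comm (intφ (u z1)), ← hUcme]
    -- algebra: L2 (U (φ z1)) = L3 (φ z1)
    conv_lhs => rw [hUdecomp]
    simp only [hL2, hL3, map_sum, _root_.map_smul, ContinuousLinearMap.sum_apply,
      ContinuousLinearMap.smul_apply, ContinuousLinearMap.coe_comp', Function.comp_apply,
      ContinuousLinearMap.flip_apply, ← hw, Finset.smul_sum, hT, happ]
    refine Finset.sum_congr rfl fun i _ => Finset.sum_congr rfl fun j _ => ?_
    simp only [smul_smul, real_inner_comm (φ z1) (g i)]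
    congr 1
    ring
  simp only [hstep]
  rw [L3.integral_comp_comm (intφ ν), ← hμ1]
  simp only [hL3, ContinuousLinearMap.sum_apply, ContinuousLinearMap.smul_apply,
    ContinuousLinearMap.coe_comp', Function.comp_apply, ContinuousLinearMap.flip_apply, ← hb]
  refine Finset.sum_congr rfl fun i _ => Finset.sum_congr rfl fun j _ => ?_
  simp only [_root_.map_smul, ContinuousLinearMap.smul_apply, smul_smul]
  rw [mul_comm (lam i) (lam j)]
end

section
/- Consider the optimal transport conditional probability path q_t(x|x₁) = N(x | t x₁, σ_t² I) with σ_t = 1 − (1 − σ_min) t, and conditional vector field u_t(x|x₁) = (x₁ − (1 − σ_min)x) / (1 − (1 − σ_min)t). Then u_t(x|x₁) = x/t + (σ_t/t) ∇_x log q_t(x|x₁), and hence the marginal vector field u_t(x) = ∫ u_t(x|x₁) q_t(x|x₁)π(x₁)/q_t(x) dx₁ equals x/t + (σ_t/t) ∇_x log q_t(x), which is a gradient field: u_t(x) = ∇_x (‖x‖²/(2t) + (σ_t/t) log q_t(x)). -/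
/-!
The Gaussian score is `∇ log N(x | a, s I) = -(x - a)/s`, and with `a = t x₁`, `s = σ_t²` a
direct computation writes the OT conditional field as `x/t + (σ_t/t) ∇ log q_t(x|x₁)`. Averaging
against the weights `q_t(x|x₁)/q_t(x)` keeps the affine term `x/t`, while the weighted conditional
scores `∇ q_t(x|x₁)/q_t(x)` integrate to `∇ q_t(x)/q_t(x) = ∇ log q_t(x)`. The only analytic input
beyond the assumed exchange of gradient and integral is the differentiability of `q_t`, obtained
by dominated convergence from the boundedness of `r ↦ r exp(-r²/(2s))`.
-/

open MeasureTheory Real InnerProductSpace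

section Gradient

variable {F : Type*} [NormedAddCommGroup F] [InnerProductSpace ℝ F] [CompleteSpace F]
  {f g : F → ℝ} {f' g' x : F}

theorem HasGradientAt.add (hf : HasGradientAt f f' x) (hg : HasGradientAt g g' x) :
    HasGradientAt (fun y => f y + g y) (f' + g') x := by
  rw [hasGradientAt_iff_hasFDerivAt, map_add]
  exact hf.hasFDerivAt.add hg.hasFDerivAt

theorem HasGradientAt.const_mul (c : ℝ) (hf : HasGradientAt f f' x) :
    HasGradientAt (fun y => c * f y) (c • f') x := by
  rw [hasGradientAt_iff_hasFDerivAt, map_smulₛₗ, conj_trivial]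
  exact hf.hasFDerivAt.const_mul c

theorem HasDerivAt.comp_hasGradientAt {h : ℝ → ℝ} {h' : ℝ} (hh : HasDerivAt h h' (f x))
    (hf : HasGradientAt f f' x) : HasGradientAt (fun y => h (f y)) (h' • f') x := by
  rw [hasGradientAt_iff_hasFDerivAt, map_smulₛₗ, conj_trivial]
  exact hh.comp_hasFDerivAt x hf.hasFDerivAt

theorem HasGradientAt.log (hf : HasGradientAt f f' x) (hx : f x ≠ 0) :
    HasGradientAt (fun y => Real.log (f y)) ((f x)⁻¹ • f') x :=
  (hasDerivAt_log hx).comp_hasGradientAt hf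

theorem hasGradientAt_norm_sub_sq (a x : F) :
    HasGradientAt (fun y => ‖y - a‖ ^ 2) ((2 : ℝ) • (x - a)) x := by
  rw [hasGradientAt_iff_hasFDerivAt, map_smulₛₗ, conj_trivial]
  have hderiv := ((hasFDerivAt_id x).sub_const a).norm_sq
  simp only [id, ContinuousLinearMap.comp_id] at hderiv
  refine hderiv.congr_fderiv ?_
  ext y
  simp

theorem hasGradientAt_gaussian (C s : ℝ) (a x : F) :
    HasGradientAt (fun y => C * exp (-‖y - a‖ ^ 2 / (2 * s)))
      ((C * exp (-‖x - a‖ ^ 2 / (2 * s)) * -s⁻¹) • (x - a)) x := by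
  have hexponent : HasGradientAt (fun y => -‖y - a‖ ^ 2 / (2 * s)) (-s⁻¹ • (x - a)) x := by
    convert (hasGradientAt_norm_sub_sq a x).const_mul (-(2 * s)⁻¹) using 1
    · ext y; ring
    · rw [smul_smul]; ring_nf
  convert ((hasDerivAt_exp _).comp_hasGradientAt hexponent).const_mul C using 1
  rw [smul_smul, smul_smul, mul_assoc]

theorem hasGradientAt_log_gaussian {C : ℝ} (hC : C ≠ 0) (s : ℝ) (a x : F) :
    HasGradientAt (fun y => Real.log (C * exp (-‖y - a‖ ^ 2 / (2 * s)))) (-s⁻¹ • (x - a)) x := by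
  convert (hasGradientAt_gaussian C s a x).log (by positivity) using 1
  rw [smul_smul, ← mul_assoc, inv_mul_cancel₀ (by positivity), one_mul]

end Gradient

theorem mul_exp_neg_sq_div_le (r : ℝ) {s : ℝ} (hs : 0 < s) :
    r * exp (-r ^ 2 / (2 * s)) ≤ √(2 * s) := by
  set c := √(2 * s)
  have hc : 0 < c := by positivity
  rw [← sq_sqrt (by positivity : 0 ≤ 2 * s), neg_div, exp_neg, ← div_eq_mul_inv,
    div_le_iff₀ (exp_pos _)]
  have hlin : r ≤ c * (r ^ 2 / c ^ 2 + 1) := by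
    rw [mul_add, mul_one, pow_two c, ← div_div, mul_div_cancel₀ _ hc.ne', div_add' _ _ _ hc.ne',
      le_div_iff₀ hc]
    nlinarith [sq_nonneg (r - c)]
  exact hlin.trans (mul_le_mul_of_nonneg_left (add_one_le_exp _) hc.le)

section GaussianMixture

variable {F : Type*} [NormedAddCommGroup F] {α : Type*} [MeasurableSpace α] {ρ : Measure α}
  [IsFiniteMeasure ρ] {a : α → F}

theorem integrable_gaussian (ha : AEStronglyMeasurable a ρ) (C : ℝ) {s : ℝ} (hs : 0 ≤ s) (y : F) :
    Integrable (fun x1 => C * exp (-‖y - a x1‖ ^ 2 / (2 * s))) ρ := by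
  refine Integrable.mono' (integrable_const |C|)
    ((by fun_prop : Continuous fun z => C * exp (-‖y - z‖ ^ 2 / (2 * s))).comp_aestronglyMeasurable
      ha) (ae_of_all _ fun x1 => ?_)
  rw [norm_mul, norm_of_nonneg (exp_pos _).le, Real.norm_eq_abs]
  exact mul_le_of_le_one_right (abs_nonneg C) (exp_le_one_iff.2
    (div_nonpos_of_nonpos_of_nonneg (neg_nonpos.2 (by positivity)) (by positivity)))

variable [InnerProductSpace ℝ F] [CompleteSpace F]

theorem differentiable_integral_gaussian (ha : AEStronglyMeasurable a ρ) (C : ℝ) {s : ℝ}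
    (hs : 0 < s) : Differentiable ℝ (fun y => ∫ x1, C * exp (-‖y - a x1‖ ^ 2 / (2 * s)) ∂ρ) := by
  intro x
  refine (hasFDerivAt_integral_of_dominated_of_fderiv_le (x₀ := x) Filter.univ_mem
    (F' := fun y x1 => toDual ℝ F ((C * exp (-‖y - a x1‖ ^ 2 / (2 * s)) * -s⁻¹) • (y - a x1)))
    (bound := fun _ => |C| * s⁻¹ * √(2 * s))
    (Filter.Eventually.of_forall fun y => (integrable_gaussian ha C hs.le y).aestronglyMeasurable)
    (integrable_gaussian ha C hs.le x) ?_ (ae_of_all _ fun x1 y _ => ?_) (integrable_const _)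
    (ae_of_all _ fun x1 y _ => (hasGradientAt_gaussian C s (a x1) y).hasFDerivAt)).differentiableAt
  · exact (by fun_prop : Continuous fun z => toDual ℝ F
      ((C * exp (-‖x - z‖ ^ 2 / (2 * s)) * -s⁻¹) • (x - z))).comp_aestronglyMeasurable ha
  · rw [LinearIsometryEquiv.norm_map, norm_smul, Real.norm_eq_abs, abs_mul, abs_mul, abs_neg,
      abs_inv, abs_of_pos hs, abs_of_pos (exp_pos _)]
    calc |C| * exp (-‖y - a x1‖ ^ 2 / (2 * s)) * s⁻¹ * ‖y - a x1‖
        = |C| * s⁻¹ * (‖y - a x1‖ * exp (-‖y - a x1‖ ^ 2 / (2 * s))) := by ring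
      _ ≤ |C| * s⁻¹ * √(2 * s) := by gcongr; exact mul_exp_neg_sq_div_le _ hs

end GaussianMixture

section Marginal

variable {F : Type*} [NormedAddCommGroup F] [InnerProductSpace ℝ F] [CompleteSpace F]

theorem integral_div_smul_add_smul_gradient_log {α : Type*} [MeasurableSpace α] {ρ : Measure α}
    {p : F → α → ℝ} {q : F → ℝ} {x : F} (c k : ℝ) (hp : ∀ x1, p x x1 ≠ 0)
    (hp_diff : ∀ x1, DifferentiableAt ℝ (p · x1) x) (hp_int : Integrable (p x) ρ)
    (hq : q x = ∫ x1, p x x1 ∂ρ) (hq_ne : q x ≠ 0) (hq_diff : DifferentiableAt ℝ q x)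
    (hswap : gradient q x = ∫ x1, gradient (p · x1) x ∂ρ)
    (hint : Integrable
      (fun x1 => (p x x1 / q x) • (c • x + k • gradient (fun y => Real.log (p y x1)) x)) ρ) :
    ∫ x1, (p x x1 / q x) • (c • x + k • gradient (fun y => Real.log (p y x1)) x) ∂ρ
      = c • x + k • gradient (fun y => Real.log (q y)) x := by
  have hsplit : ∀ x1, (p x x1 / q x) • (c • x + k • gradient (fun y => Real.log (p y x1)) x)
      = (c / q x * p x x1) • x + (k / q x) • gradient (p · x1) x := fun x1 => by
    rw [((hp_diff x1).hasGradientAt.log (hp x1)).gradient]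
    match_scalars <;> field_simp [hp x1]
  have hfirst : Integrable (fun x1 => (c / q x * p x x1) • x) ρ :=
    (hp_int.const_mul _).smul_const x
  have hsecond : Integrable (fun x1 => (k / q x) • gradient (p · x1) x) ρ := by
    refine (hint.sub hfirst).congr (ae_of_all _ fun x1 => ?_)
    simp only [Pi.sub_apply, hsplit, add_sub_cancel_left]
  calc ∫ x1, (p x x1 / q x) • (c • x + k • gradient (fun y => Real.log (p y x1)) x) ∂ρ
      = (c / q x * ∫ x1, p x x1 ∂ρ) • x + (k / q x) • ∫ x1, gradient (p · x1) x ∂ρ := by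
        simp only [hsplit]
        rw [integral_add hfirst hsecond, integral_smul_const, integral_smul, integral_const_mul]
    _ = c • x + k • ((q x)⁻¹ • gradient q x) := by
        rw [← hq, ← hswap, smul_smul, div_mul_cancel₀ _ hq_ne, div_eq_mul_inv]
    _ = c • x + k • gradient (fun y => Real.log (q y)) x := by
        rw [(hq_diff.hasGradientAt.log hq_ne).gradient]

theorem gradient_norm_sq_div_add_mul {g : F → ℝ} {x : F} (hg : DifferentiableAt ℝ g x)
    (t k : ℝ) : gradient (fun y => ‖y‖ ^ 2 / (2 * t) + k * g y) x
      = t⁻¹ • x + k • gradient g x := by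
  refine HasGradientAt.gradient ?_
  convert ((hasGradientAt_norm_sub_sq 0 x).const_mul (2 * t)⁻¹).add
    (hg.hasGradientAt.const_mul k) using 1
  · ext y; simp only [sub_zero]; ring
  · rw [sub_zero, smul_smul]; ring_nf

end Marginal

theorem ot_conditional_field_eq_add_smul_score {V : Type*} [AddCommGroup V] [Module ℝ V]
    {t σmin σ : ℝ} (ht : t ≠ 0) (hσ : σ = 1 - (1 - σmin) * t) (hσ0 : σ ≠ 0) (x x1 : V) :
    σ⁻¹ • (x1 - (1 - σmin) • x) = t⁻¹ • x + (σ / t) • (-(σ ^ 2)⁻¹ • (x - t • x1)) := by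
  match_scalars <;> field_simp
  rw [hσ]; ring

/-- For the OT conditional path `qc(x|x₁) = N(x | t x₁, σ_t² I)` with
`σ_t = 1 − (1 − σ_min) t` and conditional field
`uc(x|x₁) = (x₁ − (1 − σ_min)x)/(1 − (1 − σ_min)t)`, one has
`uc(x|x₁) = x/t + (σ_t/t) ∇ log qc(x|x₁)`, hence the marginal field
`u(x) = ∫ uc(x|x₁) qc(x|x₁) dρ(x₁)/q(x)` equals `x/t + (σ_t/t) ∇ log q(x)`, which is the
gradient field of `‖x‖²/(2t) + (σ_t/t) log q(x)`. -/
theorem stmt_8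
    {d : ℕ}
    (t σmin : ℝ) (ht : t ∈ Set.Ioo (0 : ℝ) 1) (hσmin : σmin ∈ Set.Ioo (0 : ℝ) 1)
    (σt : ℝ) (hσt : σt = 1 - (1 - σmin) * t)
    (ρ : Measure (EuclideanSpace ℝ (Fin d))) [IsProbabilityMeasure ρ]
    (qc : EuclideanSpace ℝ (Fin d) → EuclideanSpace ℝ (Fin d) → ℝ)
    (hqc : ∀ x x1, qc x x1 =
      (2 * Real.pi * σt ^ 2) ^ (-(d : ℝ) / 2) * Real.exp (-‖x - t • x1‖ ^ 2 / (2 * σt ^ 2)))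
    (uc : EuclideanSpace ℝ (Fin d) → EuclideanSpace ℝ (Fin d) → EuclideanSpace ℝ (Fin d))
    (huc : ∀ x x1, uc x x1 = (1 - (1 - σmin) * t)⁻¹ • (x1 - (1 - σmin) • x))
    (q : EuclideanSpace ℝ (Fin d) → ℝ) (hq : ∀ x, q x = ∫ x1, qc x x1 ∂ρ)
    (hq_pos : ∀ x, 0 < q x)
    -- differentiation under the integral sign is justified
    (hswap : ∀ x, gradient q x = ∫ x1, gradient (fun y => qc y x1) x ∂ρ)
    (u : EuclideanSpace ℝ (Fin d) → EuclideanSpace ℝ (Fin d))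
    (hu : ∀ x, u x = ∫ x1, (qc x x1 / q x) • uc x x1 ∂ρ)
    (hint : ∀ x, Integrable (fun x1 => (qc x x1 / q x) • uc x x1) ρ) :
    (∀ x x1, uc x x1
        = t⁻¹ • x + (σt / t) • gradient (fun y => Real.log (qc y x1)) x)
    ∧ (∀ x, u x = t⁻¹ • x + (σt / t) • gradient (fun y => Real.log (q y)) x)
    ∧ (∀ x, u x
        = gradient (fun y => ‖y‖ ^ 2 / (2 * t) + (σt / t) * Real.log (q y)) x) := by
  obtain ⟨ht0, ht1⟩ := ht
  have hσt_pos : 0 < σt := by nlinarith [hσmin.1]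
  set C := (2 * π * σt ^ 2) ^ (-(d : ℝ) / 2)
  have hC : 0 < C := by positivity
  have hmeas := (continuous_const_smul t).aestronglyMeasurable (μ := ρ)
  have hq_diff : Differentiable ℝ q := by
    simp only [funext hq, hqc]
    exact differentiable_integral_gaussian hmeas C (by positivity)
  have hcond : ∀ x x1, uc x x1 = t⁻¹ • x + (σt / t) • gradient (fun y => log (qc y x1)) x := by
    intro x x1
    simp only [huc, ← hσt, hqc, (hasGradientAt_log_gaussian hC.ne' _ _ x).gradient]
    exact ot_conditional_field_eq_add_smul_score ht0.ne' hσt hσt_pos.ne' x x1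
  have hmarginal : ∀ x, u x = t⁻¹ • x + (σt / t) • gradient (fun y => log (q y)) x := by
    intro x
    simp only [hcond] at hu hint
    rw [hu]
    refine integral_div_smul_add_smul_gradient_log _ _ (fun x1 => ?_) (fun x1 => ?_) ?_
      (hq x) (hq_pos x).ne' (hq_diff x) (hswap x) (hint x)
    · rw [hqc]; positivity
    · simp only [hqc]; exact (hasGradientAt_gaussian _ _ _ x).differentiableAt
    · exact (integrable_gaussian hmeas C (by positivity) x).congr
        (ae_of_all _ fun x1 => (hqc x x1).symm)
  refine ⟨hcond, hmarginal, fun x => ?_⟩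
  rw [gradient_norm_sq_div_add_mul ((hq_diff x).log (hq_pos x).ne'), hmarginal]
end
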